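/- arXiv:2403.17655 — 6 statements merged into one kernel-verified Lean document; each statement's English description precedes it below -/
import Mathlib

section
/- The function φ₀(x) = sin⁴(x)/x⁴ (extended continuously at 0) is in L¹ ∩ L² and its Fourier transform φ̂₀(t) = ∫_{-∞}^{∞} φ₀(x) e^{-itx} dx vanishes for all t with |t| > 4. -/
/-!
With `rect = π · 1_{[-1/(2π), 1/(2π)]}` one has `𝓕 rect = sinc` for Mathlib's normalisation
`𝓕 f ξ = ∫ e^{-2πixξ} f x dx`, so by the convolution theorem `φ₀ = sinc⁴` is the Fourier
transform of the fourfold convolution `rect ⋆ rect ⋆ rect ⋆ rect`, which is supported in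
`[-2/π, 2/π]`. Fourier inversion turns `𝓕 φ₀` into this convolution reflected, and
`φ̂₀(t) = 𝓕 φ₀ (t / 2π)` therefore vanishes for `|t| > 4`.
-/

open MeasureTheory Real

/-- `φ₀(x) = sin⁴ x / x⁴`, extended by `1` at `x = 0`. -/
noncomputable def phi0 (x : ℝ) : ℝ := if x = 0 then 1 else (Real.sin x) ^ 4 / x ^ 4

open FourierTransform Set Function Convolution ContinuousLinearMap

theorem fourier_fourier_eq_zero_of_neg_notMem_tsupport {V E : Type*} [NormedAddCommGroup V]
    [InnerProductSpace ℝ V] [FiniteDimensional ℝ V] [MeasurableSpace V] [BorelSpace V]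
    [NormedAddCommGroup E] [NormedSpace ℂ E] [CompleteSpace E]
    {f : V → E} (hf : Integrable f) (hf' : Integrable (𝓕 f)) {w : V} (hw : -w ∉ tsupport f) :
    𝓕 (𝓕 f) w = 0 := by
  have hloc : f =ᶠ[nhds (-w)] fun _ => 0 := notMem_tsupport_iff_eventuallyEq.1 hw
  rw [← neg_neg w, ← fourierInv_eq_fourier_neg, hf.fourierInv_fourier_eq hf'
    (continuousAt_const.congr hloc.symm), hloc.eq_of_nhds]

theorem integral_mul_exp_neg_I_mul_eq_fourier (f : ℝ → ℂ) (t : ℝ) :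
    ∫ x, f x * Complex.exp (-(Complex.I * t * x)) = 𝓕 f (t / (2 * π)) := by
  rw [Real.fourier_real_eq]
  congr 1 with x
  rw [Circle.smul_def, fourierChar_apply, smul_eq_mul, mul_comm]
  congr 2
  push_cast
  field_simp

theorem support_convolution_subset_Icc {𝕜 E E' F : Type*} [NontriviallyNormedField 𝕜]
    [NormedAddCommGroup E] [NormedSpace 𝕜 E] [NormedAddCommGroup E'] [NormedSpace 𝕜 E']
    [NormedAddCommGroup F] [NormedSpace 𝕜 F] [NormedSpace ℝ F]
    {f : ℝ → E} {g : ℝ → E'} {L : E →L[𝕜] E' →L[𝕜] F} {a b c d : ℝ}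
    (hf : support f ⊆ Icc a b) (hg : support g ⊆ Icc c d) :
    support (f ⋆[L] g) ⊆ Icc (a + c) (b + d) :=
  (support_convolution_subset L).trans ((add_subset_add hf hg).trans (Icc_add_Icc_subset a b c d))

theorem integral_exp_mul_I_eq_sinc_mul (a r : ℝ) :
    ∫ v in -r..r, Complex.exp (↑(a * v) * Complex.I) = 2 * r * sinc (a * r) := by
  rcases eq_or_ne a 0 with rfl | ha
  · simp only [zero_mul, Complex.ofReal_zero, Complex.exp_zero, intervalIntegral.integral_const,
      sub_neg_eq_add, Complex.real_smul, Complex.ofReal_add, mul_one, sinc_zero,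
      Complex.ofReal_one]
    ring
  · have := intervalIntegral.integral_comp_mul_left (fun t : ℝ => Complex.exp (t * Complex.I)) ha
      (a := -r) (b := r)
    simp only [mul_neg, integral_exp_mul_I_eq_sinc] at this
    have ha' : (a : ℂ) ≠ 0 := by exact_mod_cast ha
    rw [this, Complex.real_smul]
    push_cast
    field_simp

theorem fourier_indicator_Icc {r : ℝ} (hr : 0 ≤ r) (c : ℂ) (ξ : ℝ) :
    𝓕 ((Icc (-r) r).indicator fun _ => c) ξ = c * (2 * r * sinc (2 * π * r * ξ)) := by
  have integrand : (fun v => 𝐞 (-(v * ξ)) • (Icc (-r) r).indicator (fun _ => c) v) =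
      (Icc (-r) r).indicator fun v => c * Complex.exp (↑(-(2 * π * ξ) * v) * Complex.I) := by
    ext v
    by_cases hv : v ∈ Icc (-r) r
    · simp only [indicator_of_mem hv, Circle.smul_def, fourierChar_apply, smul_eq_mul]
      ring_nf
    · simp [hv]
  rw [Real.fourier_real_eq, integrand, integral_indicator measurableSet_Icc,
    integral_Icc_eq_integral_Ioc, ← intervalIntegral.integral_of_le (neg_le_self hr),
    intervalIntegral.integral_const_mul, integral_exp_mul_I_eq_sinc_mul, neg_mul, sinc_neg]
  ring_nf

theorem sinc_sq_mul_one_add_sq_le (x : ℝ) : sinc x ^ 2 * (1 + x ^ 2) ≤ 2 := by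
  have hsin : sinc x * x = sin x := by
    rcases eq_or_ne x 0 with rfl | hx
    · simp
    · rw [sinc_of_ne_zero hx, div_mul_cancel₀ _ hx]
  have hsinc : sinc x ^ 2 ≤ 1 := sq_le_one_iff_abs_le_one _ |>.2 (abs_sinc_le_one x)
  calc sinc x ^ 2 * (1 + x ^ 2) = sinc x ^ 2 + sin x ^ 2 := by rw [← hsin]; ring
    _ ≤ 2 := by linarith [sin_sq_le_one x]

theorem integrable_sinc_pow {n : ℕ} (hn : 2 ≤ n) : Integrable fun x => sinc x ^ n := by
  refine (integrable_inv_one_add_sq.const_mul 2).mono'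
    (continuous_sinc.pow n).aestronglyMeasurable (ae_of_all _ fun x => ?_)
  calc ‖sinc x ^ n‖ = |sinc x| ^ n := by rw [norm_pow, norm_eq_abs]
    _ ≤ |sinc x| ^ 2 := pow_le_pow_of_le_one (abs_nonneg _) (abs_sinc_le_one x) hn
    _ ≤ 2 * (1 + x ^ 2)⁻¹ := by
      rw [sq_abs, ← div_eq_mul_inv, le_div_iff₀ (by positivity)]
      exact sinc_sq_mul_one_add_sq_le x

theorem phi0_eq_sinc_pow_four : phi0 = fun x => sinc x ^ 4 := by
  ext x
  rcases eq_or_ne x 0 with rfl | hx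
  · simp [phi0]
  · simp [phi0, sinc_of_ne_zero hx, hx, div_pow]

theorem integrable_phi0 : Integrable phi0 :=
  phi0_eq_sinc_pow_four ▸ integrable_sinc_pow (by norm_num)

theorem memLp_phi0 : MemLp phi0 2 := by
  rw [memLp_two_iff_integrable_sq integrable_phi0.aestronglyMeasurable, phi0_eq_sinc_pow_four]
  simpa only [← pow_mul] using integrable_sinc_pow (n := 4 * 2) (by norm_num)

noncomputable def rect : ℝ → ℂ := (Icc (-(2 * π)⁻¹) (2 * π)⁻¹).indicator fun _ => (π : ℂ)

theorem fourier_rect (ξ : ℝ) : 𝓕 rect ξ = sinc ξ := by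
  rw [rect, fourier_indicator_Icc (by positivity)]
  push_cast
  field_simp

theorem integrable_rect : Integrable rect :=
  (integrableOn_const measure_Icc_lt_top.ne).integrable_indicator measurableSet_Icc

theorem support_rect : support rect ⊆ Icc (-(2 * π)⁻¹) (2 * π)⁻¹ := support_indicator_subset

noncomputable def tri : ℝ → ℂ := rect ⋆[mul ℂ ℂ] rect

theorem integrable_tri : Integrable tri :=
  integrable_rect.integrable_convolution _ integrable_rect

theorem support_tri : support tri ⊆ Icc (-π⁻¹) π⁻¹ := by
  refine (support_convolution_subset_Icc support_rect support_rect).trans_eq ?_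
  congr 1 <;> field_simp <;> ring

noncomputable def triConvTri : ℝ → ℂ := tri ⋆[mul ℂ ℂ] tri

theorem fourier_triConvTri : 𝓕 triConvTri = fun x => (phi0 x : ℂ) := by
  ext ξ
  rw [triConvTri, Real.fourier_mul_convolution_eq integrable_tri integrable_tri, tri,
    Real.fourier_mul_convolution_eq integrable_rect integrable_rect, fourier_rect,
    phi0_eq_sinc_pow_four]
  push_cast
  ring

theorem integrable_triConvTri : Integrable triConvTri :=
  integrable_tri.integrable_convolution _ integrable_tri

theorem tsupport_triConvTri : tsupport triConvTri ⊆ Icc (-(2 / π)) (2 / π) := by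
  refine closure_minimal
    ((support_convolution_subset_Icc support_tri support_tri).trans_eq ?_) isClosed_Icc
  congr 1 <;> ring

theorem stmt0 :
    Integrable phi0 ∧ MemLp phi0 2 ∧
    ∀ t : ℝ, |t| > 4 →
      (∫ x : ℝ, (phi0 x : ℂ) * Complex.exp (-(Complex.I * (t : ℂ) * (x : ℂ)))) = 0 := by
  refine ⟨integrable_phi0, memLp_phi0, fun t ht => ?_⟩
  rw [integral_mul_exp_neg_I_mul_eq_fourier (fun x => (phi0 x : ℂ)), ← fourier_triConvTri]
  refine fourier_fourier_eq_zero_of_neg_notMem_tsupport integrable_triConvTri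
    (fourier_triConvTri ▸ integrable_phi0.ofReal) fun hmem => ?_
  have hbound := abs_le.2 (tsupport_triConvTri hmem)
  rw [abs_neg, abs_div, abs_of_pos (by positivity : (0 : ℝ) < 2 * π),
    show 2 / π = 4 / (2 * π) by field_simp; ring,
    div_le_div_iff_of_pos_right (by positivity)] at hbound
  linarith
end

section
/- Let S : [0,∞) → ℝ be measurable with S(x) + Mx non-decreasing for some constant M > 0, and suppose the improper integral ∫_0^∞ e^{-σx} S(x) dx converges for every σ > 0. Then for every σ > 0 there exists X such that S(x) ≤ e^{σx} for all x ≥ X. -/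
/-!
Fix `σ > 0` and put `τ = σ / 2`. Since `S x + M x` is non-decreasing, `S` cannot drop by more
than `|M|` on a unit interval, so a point `x₀` with `S x₀ > e^{σ x₀}` forces
`∫_{x₀}^{x₀+1} e^{-τ x} S x dx ≥ e^{-τ (x₀+1)} (e^{σ x₀} - |M|)`, which tends to infinity with `x₀`.
Convergence of `∫_0^∞ e^{-τ x} S x dx` makes these unit-window integrals tend to `0`, so such
points `x₀` cannot be arbitrarily large.
-/

open MeasureTheory Real Filter Set Topology

theorem Filter.Tendsto.intervalIntegral_add_const {f : ℝ → ℝ} {L : ℝ}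
    (hf : ∀ T, 0 ≤ T → IntervalIntegrable f volume 0 T)
    (hL : Tendsto (fun T => ∫ x in (0:ℝ)..T, f x) atTop (𝓝 L)) (h : ℝ) :
    Tendsto (fun T => ∫ x in T..T + h, f x) atTop (𝓝 0) := by
  have hshift : Tendsto (fun T => ∫ x in (0:ℝ)..T + h, f x) atTop (𝓝 L) :=
    hL.comp (tendsto_atTop_add_const_right atTop h tendsto_id)
  have hdiff := hshift.sub hL
  rw [sub_self] at hdiff
  refine hdiff.congr' ?_
  filter_upwards [eventually_ge_atTop 0,
    (tendsto_atTop_add_const_right atTop h tendsto_id).eventually_ge_atTop 0] with T hT hTh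
  exact intervalIntegral.integral_interval_sub_left (hf _ hTh) (hf _ hT)

theorem tendsto_exp_mul_mul_exp_sub_atTop {σ : ℝ} (hσ : 0 < σ) (c : ℝ) :
    Tendsto (fun x => exp (-(σ / 2) * (x + 1)) * (exp (σ * x) - c)) atTop atTop := by
  have hexp : ∀ x, exp (-(σ / 2) * (x + 1)) * exp (σ * x) = exp (σ / 2 * x - σ / 2) := by
    intro x
    rw [← exp_add]
    ring_nf
  have hgrow : Tendsto (fun x => exp (σ / 2 * x - σ / 2)) atTop atTop :=
    tendsto_exp_atTop.comp
      (tendsto_atTop_add_const_right atTop _ (tendsto_id.const_mul_atTop (half_pos hσ)))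
  have hdecay : Tendsto (fun x => -c * exp (-(σ / 2 * x + σ / 2))) atTop (𝓝 0) := by
    simpa using (tendsto_exp_neg_atTop_nhds_zero.comp
      (tendsto_atTop_add_const_right atTop _
        (tendsto_id.const_mul_atTop (half_pos hσ)))).const_mul (-c)
  refine (hgrow.atTop_add hdecay).congr fun x => ?_
  rw [mul_sub, hexp]
  ring_nf

section MonotoneOnAddMul

variable {S : ℝ → ℝ} {M : ℝ} (hmono : MonotoneOn (fun x => S x + M * x) (Ici 0))
include hmono

theorem intervalIntegrable_of_monotoneOn_add_mul {a b : ℝ} (ha : 0 ≤ a) (hb : 0 ≤ b) :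
    IntervalIntegrable S volume a b := by
  have hsub : uIcc a b ⊆ Ici 0 := fun x hx => le_trans (le_min ha hb) hx.1
  have hlin : IntervalIntegrable (fun x => M * x) volume a b :=
    (continuous_const.mul continuous_id).intervalIntegrable a b
  simpa using (hmono.mono hsub).intervalIntegrable.sub hlin

theorem intervalIntegrable_exp_mul_of_monotoneOn_add_mul (τ : ℝ) {a b : ℝ}
    (ha : 0 ≤ a) (hb : 0 ≤ b) :
    IntervalIntegrable (fun x => exp (-τ * x) * S x) volume a b :=
  (intervalIntegrable_of_monotoneOn_add_mul hmono ha hb).continuousOn_mul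
    (by fun_prop)

theorem sub_abs_le_of_monotoneOn_add_mul {x₀ x : ℝ} (hx₀ : 0 ≤ x₀)
    (hx : x ∈ Icc x₀ (x₀ + 1)) : S x₀ - |M| ≤ S x := by
  have hle : S x₀ + M * x₀ ≤ S x + M * x :=
    hmono (mem_Ici.mpr hx₀) (mem_Ici.mpr (hx₀.trans hx.1)) hx.1
  nlinarith [le_abs_self M, abs_nonneg M, hx.1, hx.2]

theorem exp_mul_le_integral_of_monotoneOn_add_mul {τ x₀ v : ℝ} (hτ : 0 ≤ τ) (hx₀ : 0 ≤ x₀)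
    (hv : 0 ≤ v) (hvS : v ≤ S x₀ - |M|) :
    exp (-τ * (x₀ + 1)) * v ≤ ∫ x in x₀..x₀ + 1, exp (-τ * x) * S x := by
  have hbound : ∀ x ∈ Icc x₀ (x₀ + 1), exp (-τ * (x₀ + 1)) * v ≤ exp (-τ * x) * S x := by
    intro x hx
    have hexp : exp (-τ * (x₀ + 1)) ≤ exp (-τ * x) :=
      exp_le_exp.mpr (by nlinarith [hx.2])
    calc exp (-τ * (x₀ + 1)) * v ≤ exp (-τ * x) * v := mul_le_mul_of_nonneg_right hexp hv
      _ ≤ exp (-τ * x) * S x := mul_le_mul_of_nonneg_left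
          (hvS.trans (sub_abs_le_of_monotoneOn_add_mul hmono hx₀ hx)) (exp_nonneg _)
  simpa using intervalIntegral.integral_mono_on (by linarith) intervalIntegrable_const
    (intervalIntegrable_exp_mul_of_monotoneOn_add_mul hmono τ hx₀ (by linarith)) hbound

end MonotoneOnAddMul

theorem stmt4_general (S : ℝ → ℝ) (M : ℝ)
    (hmono : MonotoneOn (fun x => S x + M * x) (Set.Ici 0))
    (hconv : ∀ σ : ℝ, 0 < σ → ∃ L : ℝ,
      Tendsto (fun T : ℝ => ∫ x in (0:ℝ)..T, Real.exp (-σ * x) * S x) atTop (nhds L)) :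
    ∀ σ : ℝ, 0 < σ → ∃ X : ℝ, ∀ x : ℝ, X ≤ x → S x ≤ Real.exp (σ * x) := by
  intro σ hσ
  obtain ⟨L, hL⟩ := hconv (σ / 2) (half_pos hσ)
  have hwindow := hL.intervalIntegral_add_const
    (fun T hT => intervalIntegrable_exp_mul_of_monotoneOn_add_mul hmono _ le_rfl hT) 1
  obtain ⟨X, hX⟩ := ((hwindow.eventually (gt_mem_nhds one_pos)).and
    (((tendsto_exp_mul_mul_exp_sub_atTop hσ |M|).eventually_ge_atTop 1).and
      (eventually_ge_atTop 0))).exists_forall_of_atTop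
  refine ⟨X, fun x hx => ?_⟩
  by_contra! hSx
  obtain ⟨hsmall, hlarge, hx₀⟩ := hX x hx
  have hpos : 0 < exp (σ * x) - |M| :=
    pos_of_mul_pos_right (one_pos.trans_le hlarge) (exp_nonneg _)
  have hlow := exp_mul_le_integral_of_monotoneOn_add_mul hmono (half_pos hσ).le hx₀ hpos.le
    (by linarith : exp (σ * x) - |M| ≤ S x - |M|)
  linarith

theorem stmt4 (S : ℝ → ℝ) (M : ℝ) (hM : 0 < M)
    (hmeas : Measurable S)
    (hmono : MonotoneOn (fun x => S x + M * x) (Set.Ici 0))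
    (hconv : ∀ σ : ℝ, 0 < σ → ∃ L : ℝ,
      Tendsto (fun T : ℝ => ∫ x in (0:ℝ)..T, Real.exp (-σ * x) * S x) atTop (nhds L)) :
    ∀ σ : ℝ, 0 < σ → ∃ X : ℝ, ∀ x : ℝ, X ≤ x → S x ≤ Real.exp (σ * x) :=
  stmt4_general S M hmono hconv
end

section
/- Let S : [0,∞) → ℝ satisfy the hypotheses of the one-sided Ingham–Karamata theorem (S(x)+Mx non-decreasing, Laplace transform L{S;s} convergent for Re s > 0 with continuous extension to Re s = 0), extend S by 0 on (-∞,0), and let φ ∈ L¹ ∩ L² be real-valued with Fourier transform supported in [-R,R]. Then lim_{h→∞} ∫_{-∞}^{∞} S(x+h) φ(x) dx = 0. -/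
/-!
For `σ > 0` the damped function `e^{-σx} S(x)` is integrable: `S(x) + Mx - S(0) ≥ 0` on `[0, ∞)`,
so the convergent Laplace integral of `S` is absolutely convergent. Its inverse Fourier transform
at `v` is then `L(σ - 2πiv) = G(σ - 2πiv)`. In Mathlib's normalisation `K = 𝓕φ` satisfies `K(ξ) = φ̂(2πξ)`;
it is continuous with compact support, and `φ = 𝓕⁻K` almost everywhere, so the
multiplication formula gives `∫ e^{-σ(x+h)} S(x+h) φ(x) dx = 𝓕[K(v) G(σ - 2πiv)](h)`.
As `σ → 0⁺` the left side tends to `∫ S(x+h) φ(x) dx` by dominated convergence and the right side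
to `𝓕[K(v) G(-2πiv)](h)` by continuity of `G` on the closed half-plane; the latter tends to `0`
as `h → ∞` by the Riemann–Lebesgue lemma.
-/

open MeasureTheory Real Filter Set Complex

open scoped Topology FourierTransform RealInnerProductSpace

section Fourier

variable {V : Type*} [NormedAddCommGroup V] [InnerProductSpace ℝ V] [FiniteDimensional ℝ V]
  [MeasurableSpace V] [BorelSpace V]

theorem integral_fourier_mul_eq {f g : V → ℂ} (hf : Integrable f) (hg : Integrable g) :
    ∫ ξ, 𝓕 f ξ * g ξ = ∫ x, f x * 𝓕 g x := by
  have h := VectorFourier.integral_fourierIntegral_smul_eq_flip (L := innerₗ V)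
    Real.continuous_fourierChar continuous_inner hf hg
  rwa [flip_innerₗ] at h

theorem integral_fourierInv_mul_eq {f g : V → ℂ} (hf : Integrable f) (hg : Integrable g) :
    ∫ ξ, 𝓕⁻ f ξ * g ξ = ∫ x, f x * 𝓕⁻ g x := by
  have h := VectorFourier.integral_fourierIntegral_smul_eq_flip (L := -innerₗ V)
    Real.continuous_fourierChar continuous_inner.neg hf hg
  have hflip : (-innerₗ V).flip = -innerₗ V := by
    ext x y
    simp [real_inner_comm]
  rwa [hflip] at h

theorem fourierInv_comp_add_right (f : V → ℂ) (h : V) :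
    𝓕⁻ (fun x ↦ f (x + h)) = fun w ↦ 𝐞 (-⟪h, w⟫) • 𝓕⁻ f w :=
  VectorFourier.fourierIntegral_comp_add_right _ _ _ _ _

theorem ae_eq_fourierInv_fourier {f : V → ℂ} (hf : Integrable f) (hFf : Integrable (𝓕 f)) :
    f =ᵐ[volume] 𝓕⁻ (𝓕 f) := by
  -- For a test function `g`, `∫ g · 𝓕⁻𝓕f = ∫ 𝓕⁻g · 𝓕f = ∫ 𝓕𝓕⁻g · f = ∫ g · f`, by the
  -- multiplication formula twice and Fourier inversion for the Schwartz function `g`.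
  refine ae_eq_of_integral_contDiff_smul_eq hf.locallyIntegrable
    (VectorFourier.fourierIntegral_continuous Real.continuous_fourierChar continuous_inner.neg
      hFf).locallyIntegrable fun g hg hgs ↦ ?_
  have hgc : HasCompactSupport (fun x ↦ (g x : ℂ)) := hgs.comp_left Complex.ofReal_zero
  set w := hgc.toSchwartzMap (Complex.ofRealCLM.contDiff.comp hg)
  have hw : 𝓕 (𝓕⁻ ⇑w) = ⇑w :=
    w.continuous.fourier_fourierInv_eq w.integrable (𝓕 w).integrable
  simp_rw [← Complex.coe_smul, smul_eq_mul]
  change ∫ x, w x * f x = ∫ x, w x * 𝓕⁻ (𝓕 f) x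
  rw [← integral_fourierInv_mul_eq w.integrable hFf, ← SchwartzMap.fourierInv_coe,
    ← integral_fourier_mul_eq (𝓕⁻ w).integrable hf, SchwartzMap.fourierInv_coe, hw]

end Fourier

theorem integral_comp_add_mul_eq_fourier {f K φ : ℝ → ℂ} (hf : Integrable f) (hK : Integrable K)
    (hφ : φ =ᵐ[volume] 𝓕⁻ K) (h : ℝ) :
    ∫ x, f (x + h) * φ x = 𝓕 (fun v ↦ K v * 𝓕⁻ f v) h := calc
  ∫ x, f (x + h) * φ x = ∫ x, f (x + h) * 𝓕⁻ K x :=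
    integral_congr_ae (hφ.mono fun x hx ↦ by simp only [hx])
  _ = ∫ v, 𝓕⁻ (fun x ↦ f (x + h)) v * K v :=
    (integral_fourierInv_mul_eq (hf.comp_add_right h) hK).symm
  _ = 𝓕 (fun v ↦ K v * 𝓕⁻ f v) h := by
    rw [fourierInv_comp_add_right, Real.fourier_real_eq]
    congr 1 with v
    simp only [Circle.smul_def, smul_eq_mul, RCLike.inner_apply, conj_trivial]
    ring

theorem hasCompactSupport_fourier_of_fourierIntegral_eq_zero {φ : ℝ → ℝ} {R : ℝ}
    (hφ : ∀ t : ℝ, |t| > R →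
      (∫ x : ℝ, (φ x : ℂ) * Complex.exp (-(Complex.I * (t : ℂ) * (x : ℂ)))) = 0) :
    HasCompactSupport (𝓕 fun x ↦ (φ x : ℂ)) := by
  refine HasCompactSupport.intro (isCompact_closedBall 0 (R / (2 * π))) fun ξ hξ ↦ ?_
  rw [Metric.mem_closedBall, dist_zero_right, Real.norm_eq_abs, not_le,
    div_lt_iff₀ (by positivity)] at hξ
  rw [Real.fourier_real_eq_integral_exp_smul, ← hφ (2 * π * ξ) (by
    rw [abs_mul, abs_of_pos (by positivity)]; linarith)]
  congr 1 with x
  rw [smul_eq_mul, mul_comm]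
  congr 2
  push_cast
  ring

theorem tendsto_integral_exp_neg_mul_smul {E : Type*} [NormedAddCommGroup E] [NormedSpace ℝ E]
    {F : ℝ → E} (hF : Integrable F) {a : ℝ} (hFa : ∀ x < a, F x = 0) :
    Tendsto (fun σ ↦ ∫ x, rexp (-σ * (x - a)) • F x) (𝓝[>] 0) (𝓝 (∫ x, F x)) := by
  refine tendsto_integral_filter_of_dominated_convergence (fun x ↦ ‖F x‖)
    (Eventually.of_forall fun σ ↦ (by fun_prop : Continuous _).aestronglyMeasurable.smul hF.1)
    ?_ hF.norm (Eventually.of_forall fun x ↦ ?_)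
  · filter_upwards [self_mem_nhdsWithin] with σ (hσ : 0 < σ)
    refine Eventually.of_forall fun x ↦ ?_
    rcases lt_or_ge x a with hx | hx
    · simp [hFa x hx]
    · rw [norm_smul, Real.norm_of_nonneg (exp_pos _).le]
      exact mul_le_of_le_one_left (norm_nonneg _)
        (exp_le_one_iff.2 (by nlinarith))
  · have h : Tendsto (fun σ : ℝ ↦ rexp (-σ * (x - a))) (𝓝 0) (𝓝 1) := by
      simpa using (by fun_prop : Continuous fun σ : ℝ ↦ rexp (-σ * (x - a))).tendsto 0
    simpa using (h.mono_left nhdsWithin_le_nhds).smul_const (F x)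

theorem continuousOn_fourier_mul_comp_sub_mul_I {K : ℝ → ℂ} (hK : Continuous K)
    (hKs : HasCompactSupport K) {G : ℂ → ℂ} (hG : ContinuousOn G {s | 0 ≤ s.re}) (h : ℝ) :
    ContinuousOn (fun σ : ℝ ↦ 𝓕 (fun v ↦ K v * G (σ - 2 * π * v * I)) h) (Ici 0) := by
  simp_rw [Real.fourier_real_eq]
  have hGc : ContinuousOn (fun p : ℝ × ℝ ↦ G (p.1 - 2 * π * p.2 * I)) (Ici 0 ×ˢ univ) :=
    hG.comp (by fun_prop) fun p hp ↦ by simpa using hp.1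
  refine continuousOn_integral_of_compact_support hKs ?_ fun σ v _ hv ↦ ?_
  · exact (by fun_prop : Continuous fun p : ℝ × ℝ ↦ (𝐞 (-(p.2 * h)) : ℂ)).continuousOn.smul
      ((hK.comp continuous_snd).continuousOn.mul hGc)
  · simp [image_eq_zero_of_notMem_tsupport hv]

theorem integral_eq_of_tendsto_intervalIntegral {E : Type*} [NormedAddCommGroup E] [NormedSpace ℝ E]
    {f : ℝ → E} (hf : Integrable f) (hf0 : ∀ x < 0, f x = 0) {ℓ : E}
    (h : Tendsto (fun T : ℝ ↦ ∫ x in (0 : ℝ)..T, f x) atTop (𝓝 ℓ)) : ∫ x, f x = ℓ := by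
  rw [← setIntegral_eq_integral_of_forall_compl_eq_zero (s := Ici 0)
    fun x hx ↦ hf0 x (by simpa using hx), integral_Ici_eq_integral_Ioi]
  exact tendsto_nhds_unique (intervalIntegral_tendsto_integral_Ioi 0 hf.integrableOn tendsto_id) h

section Laplace

variable {S : ℝ → ℝ} {M : ℝ}

theorem intervalIntegrable_of_monotoneOn_add_mul_s6
    (hmono : MonotoneOn (fun x ↦ S x + M * x) (Ici 0)) {T : ℝ} (hT : 0 ≤ T) :
    IntervalIntegrable S volume 0 T := by
  have h := (hmono.mono (uIcc_of_le hT ▸ Icc_subset_Ici_self)).intervalIntegrable (μ := volume)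
  simpa using h.sub ((continuous_const_mul M).intervalIntegrable 0 T)

theorem integrableOn_Ioi_exp_neg_mul_of_monotoneOn_add_mul
    (hmono : MonotoneOn (fun x ↦ S x + M * x) (Ici 0)) {σ ℓ : ℝ} (hσ : 0 < σ)
    (hconv : Tendsto (fun T ↦ ∫ x in (0 : ℝ)..T, rexp (-σ * x) * S x) atTop (𝓝 ℓ)) :
    IntegrableOn (fun x ↦ rexp (-σ * x) * S x) (Ioi 0) := by
  have hlin : IntegrableOn (fun x ↦ rexp (-σ * x) * (M * x - S 0)) (Ioi 0) := by
    have hx : IntegrableOn (fun x : ℝ ↦ x ^ (1 : ℝ) * rexp (-σ * x ^ (1 : ℝ))) (Ioi 0) :=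
      integrableOn_rpow_mul_exp_neg_mul_rpow (by norm_num) one_pos hσ
    simp only [rpow_one] at hx
    have h := (hx.const_mul M).sub ((exp_neg_integrableOn_Ioi 0 hσ).const_mul (S 0))
    exact IntegrableOn.congr_fun h (fun x _ ↦ by simp only [Pi.sub_apply]; ring) measurableSet_Ioi
  have hloc : ∀ T, IntegrableOn (fun x ↦ rexp (-σ * x) * S x) (Ioc 0 T) := by
    intro T
    rcases le_total 0 T with hT | hT
    · exact ((intervalIntegrable_of_monotoneOn_add_mul_s6 hmono hT).continuousOn_mul
        (by fun_prop)).1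
    · simp [Ioc_eq_empty_of_le hT]
  set F := fun x ↦ rexp (-σ * x) * S x + rexp (-σ * x) * (M * x - S 0)
  have hF_nonneg : ∀ x ∈ Ici (0 : ℝ), 0 ≤ F x := by
    intro x hx
    have := hmono self_mem_Ici hx hx
    simp only [F, ← mul_add]
    exact mul_nonneg (exp_pos _).le (by linarith)
  have hF : IntegrableOn F (Ioi 0) := by
    refine integrableOn_Ioi_of_intervalIntegral_norm_tendsto
      (ℓ + ∫ x in Ioi 0, rexp (-σ * x) * (M * x - S 0)) 0
      (fun T ↦ (hloc T).add (hlin.mono_set Ioc_subset_Ioi_self)) tendsto_id ?_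
    refine (hconv.add (intervalIntegral_tendsto_integral_Ioi 0 hlin tendsto_id)).congr' ?_
    filter_upwards [eventually_ge_atTop 0] with T hT
    rw [id, ← intervalIntegral.integral_add
      ((intervalIntegrable_iff_integrableOn_Ioc_of_le hT).2 (hloc T))
      ((intervalIntegrable_iff_integrableOn_Ioc_of_le hT).2 (hlin.mono_set Ioc_subset_Ioi_self))]
    refine intervalIntegral.integral_congr fun x hx ↦ ?_
    rw [uIcc_of_le hT] at hx
    exact (Real.norm_of_nonneg (hF_nonneg x hx.1)).symm
  exact IntegrableOn.congr_fun (hF.sub hlin) (fun x _ ↦ by simp [F]) measurableSet_Ioi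

theorem tendsto_intervalIntegral_re_of_tendsto {σ : ℝ} {ℓ : ℂ}
    (h : Tendsto (fun T : ℝ ↦ ∫ x in (0 : ℝ)..T, cexp (-σ * x) * (S x : ℂ)) atTop (𝓝 ℓ)) :
    Tendsto (fun T ↦ ∫ x in (0 : ℝ)..T, rexp (-σ * x) * S x) atTop (𝓝 ℓ.re) := by
  refine ((continuous_re.tendsto ℓ).comp h).congr fun T ↦ ?_
  simp only [Function.comp_apply, ← ofReal_exp, ← ofReal_neg, ← ofReal_mul,
    intervalIntegral.integral_ofReal, ofReal_re]

theorem integrable_exp_neg_mul_of_monotoneOn_add_mul (hS0 : ∀ x < 0, S x = 0)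
    (hmono : MonotoneOn (fun x ↦ S x + M * x) (Ici 0)) {σ ℓ : ℝ} (hσ : 0 < σ)
    (hconv : Tendsto (fun T ↦ ∫ x in (0 : ℝ)..T, rexp (-σ * x) * S x) atTop (𝓝 ℓ)) :
    Integrable (fun x ↦ rexp (-σ * x) * S x) := by
  have h := integrableOn_Ioi_exp_neg_mul_of_monotoneOn_add_mul hmono hσ hconv
  rw [← integrableOn_Ici_iff_integrableOn_Ioi] at h
  exact h.integrable_of_forall_notMem_eq_zero fun x hx ↦ by simp [hS0 x (by simpa using hx)]

theorem fourierInv_exp_neg_mul_eq (hS0 : ∀ x < 0, S x = 0)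
    (hmono : MonotoneOn (fun x ↦ S x + M * x) (Ici 0)) {L : ℂ → ℂ}
    (hconv : ∀ s : ℂ, 0 < s.re →
      Tendsto (fun T : ℝ ↦ ∫ x in (0 : ℝ)..T, cexp (-s * x) * (S x : ℂ)) atTop (𝓝 (L s)))
    {σ : ℝ} (hσ : 0 < σ) (v : ℝ) :
    𝓕⁻ (fun x ↦ ((rexp (-σ * x) * S x : ℝ) : ℂ)) v = L (σ - 2 * π * v * I) := by
  have hs : 0 < (σ - 2 * π * v * I : ℂ).re := by simpa using hσ
  have hint := integrable_exp_neg_mul_of_monotoneOn_add_mul hS0 hmono hσ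
    (tendsto_intervalIntegral_re_of_tendsto (hconv σ (by simpa using hσ)))
  have heq : (fun x : ℝ ↦ 𝐞 ⟪x, v⟫ • ((rexp (-σ * x) * S x : ℝ) : ℂ)) =
      fun x : ℝ ↦ cexp (-(σ - 2 * π * v * I) * x) * S x := by
    ext x
    simp only [Circle.smul_def, Real.fourierChar_apply, RCLike.inner_apply, conj_trivial,
      smul_eq_mul]
    push_cast
    rw [← mul_assoc, ← Complex.exp_add]
    ring_nf
  have hint' :=
    (Real.fourierIntegral_convergent_iff (f := fun x ↦ ((rexp (-σ * x) * S x : ℝ) : ℂ)) (-v)).2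
      hint.ofReal
  simp only [inner_neg_right, neg_neg, heq] at hint'
  rw [Real.fourierInv_eq, heq]
  exact integral_eq_of_tendsto_intervalIntegral hint' (fun x hx ↦ by simp [hS0 x hx]) (hconv _ hs)

theorem integral_exp_neg_mul_smul_eq_fourier (hS0 : ∀ x < 0, S x = 0)
    (hmono : MonotoneOn (fun x ↦ S x + M * x) (Ici 0)) {L : ℂ → ℂ}
    (hconv : ∀ s : ℂ, 0 < s.re →
      Tendsto (fun T : ℝ ↦ ∫ x in (0 : ℝ)..T, cexp (-s * x) * (S x : ℂ)) atTop (𝓝 (L s)))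
    {φ K : ℝ → ℂ} (hK : Integrable K) (hφK : φ =ᵐ[volume] 𝓕⁻ K) {σ : ℝ} (hσ : 0 < σ) (h : ℝ) :
    ∫ x, rexp (-σ * (x + h)) • ((S (x + h) : ℂ) * φ x) =
      𝓕 (fun v ↦ K v * L (σ - 2 * π * v * I)) h := by
  have hint := (integrable_exp_neg_mul_of_monotoneOn_add_mul hS0 hmono hσ
    (tendsto_intervalIntegral_re_of_tendsto (hconv σ (by simpa using hσ)))).ofReal (𝕜 := ℂ)
  calc ∫ x, rexp (-σ * (x + h)) • ((S (x + h) : ℂ) * φ x)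
      = ∫ x, ((rexp (-σ * (x + h)) * S (x + h) : ℝ) : ℂ) * φ x := by
        simp_rw [real_smul, ofReal_mul, mul_assoc]
    _ = 𝓕 (fun v ↦ K v * 𝓕⁻ (fun y ↦ ((rexp (-σ * y) * S y : ℝ) : ℂ)) v) h :=
        integral_comp_add_mul_eq_fourier hint hK hφK h
    _ = 𝓕 (fun v ↦ K v * L (σ - 2 * π * v * I)) h := by
        simp_rw [fourierInv_exp_neg_mul_eq hS0 hmono hconv hσ]

theorem tendsto_fourier_mul_comp_sub_mul_I (hS0 : ∀ x < 0, S x = 0)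
    (hmono : MonotoneOn (fun x ↦ S x + M * x) (Ici 0)) {L G : ℂ → ℂ}
    (hconv : ∀ s : ℂ, 0 < s.re →
      Tendsto (fun T : ℝ ↦ ∫ x in (0 : ℝ)..T, cexp (-s * x) * (S x : ℂ)) atTop (𝓝 (L s)))
    (hGL : ∀ s : ℂ, 0 < s.re → G s = L s) {φ K : ℝ → ℂ} (hK : Integrable K)
    (hφK : φ =ᵐ[volume] 𝓕⁻ K) {h : ℝ} (hint : Integrable fun x ↦ (S (x + h) : ℂ) * φ x) :
    Tendsto (fun σ : ℝ ↦ 𝓕 (fun v ↦ K v * G (σ - 2 * π * v * I)) h) (𝓝[>] 0)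
      (𝓝 (∫ x, (S (x + h) : ℂ) * φ x)) := by
  refine (tendsto_integral_exp_neg_mul_smul hint (a := -h) fun x hx ↦ by
    simp [hS0 (x + h) (by linarith)]).congr' ?_
  filter_upwards [self_mem_nhdsWithin] with σ (hσ : 0 < σ)
  simp_rw [sub_neg_eq_add]
  have hLG : (fun v : ℝ ↦ K v * L (σ - 2 * π * v * I)) = fun v ↦ K v * G (σ - 2 * π * v * I) :=
    funext fun v ↦ by rw [hGL _ (by simpa using hσ)]
  rw [integral_exp_neg_mul_smul_eq_fourier hS0 hmono hconv hK hφK hσ h, hLG]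

end Laplace

theorem stmt6_general (S : ℝ → ℝ) (M : ℝ)
    (hS0 : ∀ x : ℝ, x < 0 → S x = 0)
    (hmono : MonotoneOn (fun x => S x + M * x) (Set.Ici 0))
    (L : ℂ → ℂ)
    (hconv : ∀ s : ℂ, 0 < s.re →
      Tendsto (fun T : ℝ => ∫ x in (0:ℝ)..T, Complex.exp (-s * x) * (S x : ℂ))
        atTop (nhds (L s)))
    (G : ℂ → ℂ) (hG : ContinuousOn G {s : ℂ | 0 ≤ s.re})
    (hGL : ∀ s : ℂ, 0 < s.re → G s = L s)
    (φ : ℝ → ℝ) (hφ1 : Integrable φ) (R : ℝ)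
    (hφhat : ∀ t : ℝ, |t| > R →
      (∫ x : ℝ, (φ x : ℂ) * Complex.exp (-(Complex.I * (t : ℂ) * (x : ℂ)))) = 0) :
    Tendsto (fun h : ℝ => ∫ x : ℝ, S (x + h) * φ x) atTop (nhds 0) := by
  set K := 𝓕 fun x ↦ (φ x : ℂ)
  have hKs : HasCompactSupport K := hasCompactSupport_fourier_of_fourierIntegral_eq_zero hφhat
  have hKc : Continuous K :=
    VectorFourier.fourierIntegral_continuous Real.continuous_fourierChar continuous_inner hφ1.ofReal
  have hKi : Integrable K := hKc.integrable_of_hasCompactSupport hKs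
  have hφK := ae_eq_fourierInv_fourier hφ1.ofReal hKi
  set k := fun (σ v : ℝ) ↦ K v * G (σ - 2 * π * v * I)
  have hRL : Tendsto (fun h ↦ ‖𝓕 (k 0) h‖) atTop (𝓝 0) := by
    simpa using ((Real.zero_at_infty_fourier (k 0)).mono_left atTop_le_cocompact).norm
  refine squeeze_zero_norm (fun h ↦ ?_) hRL
  by_cases hint : Integrable fun x ↦ S (x + h) * φ x
  swap
  · simp [integral_undef hint]
  have hint' : Integrable fun x ↦ (S (x + h) : ℂ) * φ x := by simpa using hint.ofReal (𝕜 := ℂ)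
  have hval : ((∫ x, S (x + h) * φ x : ℝ) : ℂ) = ∫ x, (S (x + h) : ℂ) * φ x := by
    rw [← integral_complex_ofReal]
    push_cast
    rfl
  have hlim := (continuousOn_fourier_mul_comp_sub_mul_I hKc hKs hG h 0 self_mem_Ici).mono
    Ioi_subset_Ici_self
  rw [← Complex.norm_real, hval]
  exact (congrArg norm (tendsto_nhds_unique
    (tendsto_fourier_mul_comp_sub_mul_I hS0 hmono hconv hGL hKi hφK hint') hlim)).le

/-- The averaged (Wiener-type) convergence step in the proof of the
one-sided Ingham–Karamata theorem. -/
theorem stmt6 (S : ℝ → ℝ) (M : ℝ) (hM : 0 < M)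
    (hS0 : ∀ x : ℝ, x < 0 → S x = 0)
    (hmono : MonotoneOn (fun x => S x + M * x) (Set.Ici 0))
    (L : ℂ → ℂ)
    (hconv : ∀ s : ℂ, 0 < s.re →
      Tendsto (fun T : ℝ => ∫ x in (0:ℝ)..T, Complex.exp (-s * x) * (S x : ℂ))
        atTop (nhds (L s)))
    (G : ℂ → ℂ) (hG : ContinuousOn G {s : ℂ | 0 ≤ s.re})
    (hGL : ∀ s : ℂ, 0 < s.re → G s = L s)
    (φ : ℝ → ℝ) (hφ1 : Integrable φ) (hφ2 : MemLp φ 2) (R : ℝ)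
    (hφhat : ∀ t : ℝ, |t| > R →
      (∫ x : ℝ, (φ x : ℂ) * Complex.exp (-(Complex.I * (t : ℂ) * (x : ℂ)))) = 0) :
    Tendsto (fun h : ℝ => ∫ x : ℝ, S (x + h) * φ x) atTop (nhds 0) :=
  stmt6_general S M hS0 hmono L hconv G hG hGL φ hφ1 R hφhat
end

section
/- Let S : [0,∞) → ℝ with S(x) + Mx non-decreasing for some M > 0, extended by 0 on (-∞,0), and let φ ∈ L¹(ℝ) satisfy ∫ φ = 1, φ(x) ≥ 0 for x ≥ 0, φ(x) ≤ 0 for x ≤ 0, and ∫ xφ(x) dx < ε. Then for all sufficiently large h (namely whenever S(h) + Mh ≥ 0), S(h) ≤ ∫_{-∞}^{∞} S(x+h) φ(x) dx + Mε. -/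
/-! Put `G y = S y + M y`. Since `S` vanishes on the negatives and `G h ≥ 0`, the function `G`
lies below `G h` to the left of `h` and above it to the right, so the sign pattern of `φ` gives
`G h φ(x) ≤ G (x + h) φ(x)` pointwise. Integrating against `∫ φ = 1` yields
`S h + M h ≤ ∫ S(x + h) φ(x) dx + M ∫ x φ(x) dx + M h`, and `∫ x φ < ε`. -/

open MeasureTheory

section SignPattern

variable {G φ : ℝ → ℝ} {h : ℝ}

theorem mul_le_mul_comp_add_of_sign (hle : ∀ y ≤ h, G y ≤ G h) (hge : ∀ y, h ≤ y → G h ≤ G y)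
    (hφpos : ∀ x, 0 ≤ x → 0 ≤ φ x) (hφneg : ∀ x, x ≤ 0 → φ x ≤ 0) (x : ℝ) :
    G h * φ x ≤ G (x + h) * φ x := by
  rcases le_total 0 x with hx | hx
  · exact mul_le_mul_of_nonneg_right (hge _ (by linarith)) (hφpos x hx)
  · exact mul_le_mul_of_nonpos_right (hle _ (by linarith)) (hφneg x hx)

theorem le_integral_comp_add_mul_of_sign (hle : ∀ y ≤ h, G y ≤ G h)
    (hge : ∀ y, h ≤ y → G h ≤ G y) (hφpos : ∀ x, 0 ≤ x → 0 ≤ φ x)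
    (hφneg : ∀ x, x ≤ 0 → φ x ≤ 0) (hφ : Integrable φ) (hφint : ∫ x, φ x = 1)
    (hGφ : Integrable fun x => G (x + h) * φ x) :
    G h ≤ ∫ x, G (x + h) * φ x := by
  calc G h = ∫ x, G h * φ x := by rw [integral_const_mul, hφint, mul_one]
    _ ≤ ∫ x, G (x + h) * φ x :=
      integral_mono (hφ.const_mul _) hGφ (mul_le_mul_comp_add_of_sign hle hge hφpos hφneg)

end SignPattern

theorem add_mul_le_add_mul_of_le {S : ℝ → ℝ} {M h y : ℝ} (hM : 0 < M)
    (hS0 : ∀ x : ℝ, x < 0 → S x = 0) (hmono : MonotoneOn (fun x => S x + M * x) (Set.Ici 0))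
    (hSh : 0 ≤ S h + M * h) (hy : y ≤ h) :
    S y + M * y ≤ S h + M * h := by
  rcases le_or_gt 0 y with hy0 | hy0
  · exact hmono (Set.mem_Ici.2 hy0) (Set.mem_Ici.2 (hy0.trans hy)) hy
  · rw [hS0 y hy0]
    nlinarith

theorem integral_add_mul_add_mul {f φ : ℝ → ℝ} (M h : ℝ) (hfφ : Integrable fun x => f x * φ x)
    (hxφ : Integrable fun x => x * φ x) (hφ : Integrable φ) :
    (Integrable fun x => (f x + M * (x + h)) * φ x) ∧
      ∫ x, (f x + M * (x + h)) * φ x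
        = (∫ x, f x * φ x) + M * (∫ x, x * φ x) + M * h * ∫ x, φ x := by
  have hsplit : (fun x => (f x + M * (x + h)) * φ x)
      = fun x => (f x * φ x + M * (x * φ x)) + M * h * φ x := by
    funext x; ring
  have hA : Integrable fun x => f x * φ x + M * (x * φ x) := hfφ.add (hxφ.const_mul M)
  rw [hsplit, integral_add hA (hφ.const_mul _), integral_add hfφ (hxφ.const_mul M),
    integral_const_mul, integral_const_mul]
  exact ⟨hA.add (hφ.const_mul _), rfl⟩

theorem stmt8 (S : ℝ → ℝ) (M ε : ℝ) (hM : 0 < M)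
    (hS0 : ∀ x : ℝ, x < 0 → S x = 0)
    (hmono : MonotoneOn (fun x => S x + M * x) (Set.Ici 0))
    (φ : ℝ → ℝ) (hφ1 : Integrable φ)
    (hφint : (∫ x : ℝ, φ x) = 1)
    (hφpos : ∀ x : ℝ, 0 ≤ x → 0 ≤ φ x)
    (hφneg : ∀ x : ℝ, x ≤ 0 → φ x ≤ 0)
    (hxφ : Integrable (fun x : ℝ => x * φ x))
    (hxφε : (∫ x : ℝ, x * φ x) < ε)
    (h : ℝ) (hh : 0 ≤ h) (hSh : 0 ≤ S h + M * h)
    (hint : Integrable (fun x : ℝ => S (x + h) * φ x)) :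
    S h ≤ (∫ x : ℝ, S (x + h) * φ x) + M * ε := by
  obtain ⟨hGφ, hGφ_eq⟩ := integral_add_mul_add_mul M h hint hxφ hφ1
  have hG : S h + M * h ≤ ∫ x, (S (x + h) + M * (x + h)) * φ x :=
    le_integral_comp_add_mul_of_sign (G := fun y => S y + M * y)
      (fun _ hy => add_mul_le_add_mul_of_le hM hS0 hmono hSh hy)
      (fun _ hy => hmono (Set.mem_Ici.2 hh) (Set.mem_Ici.2 (hh.trans hy)) hy)
      hφpos hφneg hφ1 hφint hGφ
  rw [hGφ_eq, hφint, mul_one] at hG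
  linarith [mul_lt_mul_of_pos_left hxφε hM]
end

section
/- If the sharp Mertens relation holds, i.e. lim_{x→∞} (ψ₁(x) − log x) = −γ where ψ₁(x) = Σ_{p^k ≤ x} (log p)/p^k (sum over prime powers), then the prime number theorem holds: lim_{x→∞} ψ(x)/x = 1, where ψ(x) = Σ_{p^k ≤ x} log p. -/
open Filter ArithmeticFunction

/-- Chebyshev function `ψ(x) = ∑_{n ≤ x} Λ(n) = ∑_{p^k ≤ x} log p`. -/
noncomputable def chebyshevPsi (x : ℝ) : ℝ :=
  ∑ n ∈ Finset.Icc 1 ⌊x⌋₊, Λ n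

/-- `ψ₁(x) = ∑_{n ≤ x} Λ(n)/n = ∑_{p^k ≤ x} (log p)/p^k`. -/
noncomputable def chebyshevPsi1 (x : ℝ) : ℝ :=
  ∑ n ∈ Finset.Icc 1 ⌊x⌋₊, Λ n / n

/-!
Summation by parts gives `ψ(N) = ∑_{n<N} (n+1)(ψ₁(n+1) - ψ₁(n)) = N ψ₁(N) - ∑_{n<N} ψ₁(n)`.
Write `ψ₁(n) = log n + T(n)` with `T(n) → c`. The `T`-part contributes `N T(N) - ∑_{n<N} T(n) = o(N)`
by Cesàro, while the `log`-part is the Cesàro sum of `(n+1) log((n+1)/n) → 1`, hence `~ N`.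
-/

open Finset Topology

theorem sum_range_succ_mul_sub {R : Type*} [CommRing R] (S : ℕ → R) (N : ℕ) :
    ∑ n ∈ range N, (n + 1) * (S (n + 1) - S n) = N * S N - ∑ n ∈ range N, S n := by
  induction N with
  | zero => simp
  | succ N ih =>
    rw [sum_range_succ, ih, sum_range_succ]
    push_cast
    ring

theorem tendsto_succ_mul_log_succ_sub_log :
    Tendsto (fun n : ℕ => (n + 1 : ℝ) * (Real.log (n + 1) - Real.log n)) atTop (𝓝 1) := by
  have hlim : Tendsto (fun x : ℝ => -(x * Real.log (1 + -1 / x))) atTop (𝓝 1) := by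
    simpa using (Real.tendsto_mul_log_one_add_div_atTop (-1)).neg
  have hsucc : Tendsto (fun n : ℕ => (n + 1 : ℝ)) atTop atTop :=
    tendsto_natCast_atTop_atTop.atTop_add tendsto_const_nhds
  refine (hlim.comp hsucc).congr' ?_
  filter_upwards [eventually_ge_atTop 1] with n hn
  have hn0 : (n : ℝ) ≠ 0 := by positivity
  have hm0 : (n + 1 : ℝ) ≠ 0 := by positivity
  have hsplit : (1 : ℝ) + -1 / (n + 1) = n / (n + 1) := by
    field_simp
    ring
  simp only [Function.comp_apply, hsplit, Real.log_div hn0 hm0]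
  ring

theorem tendsto_cesaro_succ_mul_sub_of_tendsto_sub_log {S : ℕ → ℝ} {c : ℝ}
    (h : Tendsto (fun n : ℕ => S n - Real.log n) atTop (𝓝 c)) :
    Tendsto (fun N : ℕ => (N : ℝ)⁻¹ * ∑ n ∈ range N, (n + 1) * (S (n + 1) - S n))
      atTop (𝓝 1) := by
  set T : ℕ → ℝ := fun n => S n - Real.log n
  have hlog := tendsto_succ_mul_log_succ_sub_log.cesaro
  have hT : Tendsto (fun N : ℕ => (N : ℝ)⁻¹ * ∑ n ∈ range N, (n + 1) * (T (n + 1) - T n))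
      atTop (𝓝 0) := by
    have hdiff := h.sub h.cesaro
    rw [sub_self] at hdiff
    refine hdiff.congr' ?_
    filter_upwards [eventually_ne_atTop 0] with N hN
    rw [sum_range_succ_mul_sub, mul_sub, ← mul_assoc, inv_mul_cancel₀ (by positivity), one_mul]
  rw [← add_zero 1]
  refine (hlog.add hT).congr fun N => ?_
  rw [← mul_add, ← sum_add_distrib]
  congr 2 with n
  simp only [T]
  push_cast
  ring

theorem tendsto_div_of_tendsto_natCast_div {f : ℝ → ℝ} {l : ℝ} (hf : ∀ x, f x = f ⌊x⌋₊)
    (h : Tendsto (fun N : ℕ => f N / N) atTop (𝓝 l)) :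
    Tendsto (fun x => f x / x) atTop (𝓝 l) := by
  rw [← mul_one l]
  refine ((h.comp tendsto_nat_floor_atTop).mul tendsto_nat_floor_div_atTop).congr' ?_
  filter_upwards [eventually_ge_atTop 1] with x hx
  have hfloor : (⌊x⌋₊ : ℝ) ≠ 0 := by simpa using Nat.one_le_floor_iff x |>.mpr hx
  rw [Function.comp_apply, div_mul_div_cancel₀ hfloor, ← hf]

theorem chebyshevPsi_natCast_floor (x : ℝ) : chebyshevPsi x = chebyshevPsi ⌊x⌋₊ := by
  simp [chebyshevPsi]

theorem chebyshevPsi1_natCast_succ (n : ℕ) :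
    chebyshevPsi1 (n + 1 : ℕ) = chebyshevPsi1 n + Λ (n + 1) / (n + 1) := by
  rw [chebyshevPsi1, chebyshevPsi1, Nat.floor_natCast, Nat.floor_natCast,
    sum_Icc_succ_top (Nat.le_add_left 1 n)]
  push_cast
  rfl

theorem chebyshevPsi_natCast (N : ℕ) :
    chebyshevPsi N = ∑ n ∈ range N, (n + 1) * (chebyshevPsi1 (n + 1 : ℕ) - chebyshevPsi1 n) := by
  have hcancel (n : ℕ) : (n + 1 : ℝ) * (Λ (n + 1) / (n + 1)) = Λ (n + 1) :=
    mul_div_cancel₀ _ n.cast_add_one_ne_zero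
  simp only [chebyshevPsi1_natCast_succ, add_sub_cancel_left, hcancel, chebyshevPsi,
    Nat.floor_natCast]
  rw [range_eq_Ico, sum_Ico_add' (fun k => (Λ k : ℝ)), zero_add, Ico_add_one_right_eq_Icc]

theorem stmt9
    (hmertens : Tendsto (fun x : ℝ => chebyshevPsi1 x - Real.log x) atTop
      (nhds (-Real.eulerMascheroniConstant))) :
    Tendsto (fun x : ℝ => chebyshevPsi x / x) atTop (nhds 1) := by
  have hnat : Tendsto (fun N : ℕ => chebyshevPsi N / N) atTop (𝓝 1) := by
    simpa only [chebyshevPsi_natCast, div_eq_inv_mul] using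
      tendsto_cesaro_succ_mul_sub_of_tendsto_sub_log (hmertens.comp tendsto_natCast_atTop_atTop)
  exact tendsto_div_of_tendsto_natCast_div chebyshevPsi_natCast_floor hnat
end

section
/- The function s ↦ −ζ'(s+1)/(s·ζ(s+1)) − 1/s² + γ/s, defined for Re s > 0, extends continuously to the closed half-plane Re s ≥ 0. -/
/-!
Write `ζ(w) = ζ₁(w) / (w - 1)` with `ζ₁` entire, `ζ₁(1) = 1` and `ζ₁'(1) = γ`. With `w = s + 1`,
the logarithmic derivative gives
`-ζ'(w) / (s ζ(w)) - 1/s² + γ/s = (γ ζ₁(w) - ζ₁'(w)) / (s ζ₁(w))`.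
The numerator is entire and vanishes at `w = 1`, so its quotient by `s = w - 1` is entire, and
`ζ₁` has no zeros on `Re w ≥ 1` by the nonvanishing of `ζ` on that line.
-/

local notation "γ" => Real.eulerMascheroniConstant

lemma riemannZeta₁_ne_zero_of_one_le_re {w : ℂ} (hw : 1 ≤ w.re) : riemannZeta₁ w ≠ 0 := by
  rcases eq_or_ne w 1 with rfl | hw₁
  · simp
  · have hζ := riemannZeta_ne_zero_of_one_le_re hw
    rw [riemannZeta_eq_inv_sub_mul hw₁] at hζ
    exact right_ne_zero_of_mul hζ

lemma Differentiable.continuous_dslope {𝕜 E : Type*} [NontriviallyNormedField 𝕜]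
    [NormedAddCommGroup E] [NormedSpace 𝕜 E] {f : 𝕜 → E} (hf : Differentiable 𝕜 f) (a : 𝕜) :
    Continuous (dslope f a) :=
  continuousOn_univ.mp <|
    (continuousOn_dslope Filter.univ_mem).mpr ⟨hf.continuous.continuousOn, hf a⟩

lemma differentiable_gamma_mul_riemannZeta₁_sub_deriv :
    Differentiable ℂ fun w ↦ (γ : ℂ) * riemannZeta₁ w - deriv riemannZeta₁ w :=
  (differentiable_riemannZeta₁.const_mul _).sub differentiable_riemannZeta₁.deriv

lemma neg_deriv_riemannZeta_div_sub_add_eq_dslope {s : ℂ} (hs : s ≠ 0)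
    (hζ₁ : riemannZeta₁ (s + 1) ≠ 0) :
    -(deriv riemannZeta (s + 1)) / (s * riemannZeta (s + 1)) - 1 / s ^ 2 + (γ : ℂ) / s =
      dslope (fun w ↦ (γ : ℂ) * riemannZeta₁ w - deriv riemannZeta₁ w) 1 (s + 1) /
        riemannZeta₁ (s + 1) := by
  have hw : s + 1 ≠ 1 := by simpa using hs
  rw [dslope_of_ne _ hw, slope_def_field, deriv_riemannZeta_eq_neg_inv_sub_sq_mul_add hw,
    riemannZeta_eq_inv_sub_mul hw]
  simp only [add_sub_cancel_right, riemannZeta₁_one, deriv_riemannZeta₁_one]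
  field_simp
  ring

theorem stmt12 :
    ∃ G : ℂ → ℂ, ContinuousOn G {s : ℂ | 0 ≤ s.re} ∧
      ∀ s : ℂ, 0 < s.re →
        G s = -(deriv riemannZeta (s + 1)) / (s * riemannZeta (s + 1))
          - 1 / s ^ 2 + (Real.eulerMascheroniConstant : ℂ) / s := by
  set h := fun w ↦ (γ : ℂ) * riemannZeta₁ w - deriv riemannZeta₁ w
  have hζ₁ {s : ℂ} (hs : 0 ≤ s.re) : riemannZeta₁ (s + 1) ≠ 0 :=
    riemannZeta₁_ne_zero_of_one_le_re (by simpa using hs)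
  refine ⟨fun s ↦ dslope h 1 (s + 1) / riemannZeta₁ (s + 1), ?_, fun s hs ↦ ?_⟩
  · have hshift : Continuous fun s : ℂ ↦ s + 1 := continuous_add_const 1
    exact ((differentiable_gamma_mul_riemannZeta₁_sub_deriv.continuous_dslope 1).comp
      hshift).continuousOn.div (differentiable_riemannZeta₁.continuous.comp hshift).continuousOn
      fun s hs ↦ hζ₁ hs
  · have hs₀ : s ≠ 0 := by rintro rfl; simp at hs
    exact (neg_deriv_riemannZeta_div_sub_add_eq_dslope hs₀ (hζ₁ hs.le)).symm
end
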